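/- The Bell matrix B = (1/√2)·[[1,0,0,1],[0,1,−1,0],[0,1,1,0],[−1,0,0,1]] (equivalently, with overall factor 1/√2 matching the normalization B|00⟩ = (|00⟩−|11⟩)/√2 etc.) satisfies the braided Yang–Baxter relation (B ⊗ I₂)(I₂ ⊗ B)(B ⊗ I₂) = (I₂ ⊗ B)(B ⊗ I₂)(I₂ ⊗ B) as 8×8 matrices. -/

import Mathlib

open Matrix Kronecker

/-- The Bell matrix `B`, with `B|00⟩ = (|00⟩ − |11⟩)/√2`, `B|01⟩ = (|01⟩ + |10⟩)/√2`,
`B|10⟩ = (−|01⟩ + |10⟩)/√2`, `B|11⟩ = (|00⟩ + |11⟩)/√2`. -/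
noncomputable def BellMat : Matrix (Fin 4) (Fin 4) ℂ :=
  (((Real.sqrt 2 : ℂ))⁻¹) • !![1, 0, 0, 1; 0, 1, -1, 0; 0, 1, 1, 0; -1, 0, 0, 1]

/-- `B ⊗ I₂` as an 8×8 matrix. -/
noncomputable def BellOn12 : Matrix (Fin 8) (Fin 8) ℂ :=
  Matrix.reindex finProdFinEquiv finProdFinEquiv
    (BellMat ⊗ₖ (1 : Matrix (Fin 2) (Fin 2) ℂ))

/-- `I₂ ⊗ B` as an 8×8 matrix. -/
noncomputable def BellOn23 : Matrix (Fin 8) (Fin 8) ℂ :=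
  Matrix.reindex finProdFinEquiv finProdFinEquiv
    ((1 : Matrix (Fin 2) (Fin 2) ℂ) ⊗ₖ BellMat)

/-! The braid relation is homogeneous of degree three in `B` and is preserved by ring
homomorphisms, so it reduces to the integer matrix `√2 • B`, where it is a finite computation. -/

section BraidRelation

variable {R S : Type*}

def onFactors12 [Zero R] [One R] [Mul R] (M : Matrix (Fin 4) (Fin 4) R) :
    Matrix (Fin 8) (Fin 8) R :=
  reindex finProdFinEquiv finProdFinEquiv (M ⊗ₖ (1 : Matrix (Fin 2) (Fin 2) R))

def onFactors23 [Zero R] [One R] [Mul R] (M : Matrix (Fin 4) (Fin 4) R) :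
    Matrix (Fin 8) (Fin 8) R :=
  reindex finProdFinEquiv finProdFinEquiv ((1 : Matrix (Fin 2) (Fin 2) R) ⊗ₖ M)

def SatisfiesBraidRelation [NonUnitalNonAssocSemiring R] [One R]
    (M : Matrix (Fin 4) (Fin 4) R) : Prop :=
  onFactors12 M * onFactors23 M * onFactors12 M = onFactors23 M * onFactors12 M * onFactors23 M

theorem onFactors12_map [NonAssocSemiring R] [NonAssocSemiring S] (f : R →+* S)
    (M : Matrix (Fin 4) (Fin 4) R) : onFactors12 (M.map f) = (onFactors12 M).map f := by
  ext i j
  simp [onFactors12, one_apply, apply_ite f]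

theorem onFactors23_map [NonAssocSemiring R] [NonAssocSemiring S] (f : R →+* S)
    (M : Matrix (Fin 4) (Fin 4) R) : onFactors23 (M.map f) = (onFactors23 M).map f := by
  ext i j
  simp [onFactors23, one_apply, apply_ite f]

theorem onFactors12_smul [CommSemiring R] (c : R) (M : Matrix (Fin 4) (Fin 4) R) :
    onFactors12 (c • M) = c • onFactors12 M := by
  rw [onFactors12, onFactors12, smul_kronecker]
  rfl

theorem onFactors23_smul [CommSemiring R] (c : R) (M : Matrix (Fin 4) (Fin 4) R) :
    onFactors23 (c • M) = c • onFactors23 M := by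
  rw [onFactors23, onFactors23, kronecker_smul]
  rfl

theorem SatisfiesBraidRelation.map [NonAssocSemiring R] [NonAssocSemiring S]
    {M : Matrix (Fin 4) (Fin 4) R} (hM : SatisfiesBraidRelation M) (f : R →+* S) :
    SatisfiesBraidRelation (M.map f) := by
  unfold SatisfiesBraidRelation at hM ⊢
  simp only [onFactors12_map, onFactors23_map, ← Matrix.map_mul, hM]

theorem SatisfiesBraidRelation.smul [CommSemiring R] {M : Matrix (Fin 4) (Fin 4) R}
    (hM : SatisfiesBraidRelation M) (c : R) : SatisfiesBraidRelation (c • M) := by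
  unfold SatisfiesBraidRelation at hM ⊢
  simp only [onFactors12_smul, onFactors23_smul, Matrix.smul_mul, Matrix.mul_smul, smul_smul, hM]

end BraidRelation

def bellInt : Matrix (Fin 4) (Fin 4) ℤ :=
  !![1, 0, 0, 1; 0, 1, -1, 0; 0, 1, 1, 0; -1, 0, 0, 1]

theorem satisfiesBraidRelation_bellInt : SatisfiesBraidRelation bellInt := by
  unfold SatisfiesBraidRelation
  decide

theorem bellMat_eq_smul_bellInt :
    BellMat = (Real.sqrt 2 : ℂ)⁻¹ • bellInt.map (Int.castRingHom ℂ) := by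
  ext i j
  fin_cases i <;> fin_cases j <;> simp [BellMat, bellInt]

/-- The Bell matrix satisfies the braided Yang–Baxter relation
`(B ⊗ I₂)(I₂ ⊗ B)(B ⊗ I₂) = (I₂ ⊗ B)(B ⊗ I₂)(I₂ ⊗ B)`. -/
theorem BellMat_braid_relation :
    BellOn12 * BellOn23 * BellOn12 = BellOn23 * BellOn12 * BellOn23 := by
  have h : SatisfiesBraidRelation BellMat := by
    rw [bellMat_eq_smul_bellInt]
    exact (satisfiesBraidRelation_bellInt.map (Int.castRingHom ℂ)).smul _
  exact h
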